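/- Let λ > 0 and let f_V be a probability density on [0,1]. Define μ₁ = λ^{−1/λ} ∫₀¹ τ(v)^{−1/λ} f_V(v) dv and μ₂ = λ^{−1/λ} ∫₀¹ τ(1−v)^{−1/λ} f_V(v) dv, and for 0 < w < 1 define h(w; λ, f_V) = (1/2)·λ^{1−1/λ}·w^{λ−1}(1−w)^{λ−1} μ₁^λ μ₂^λ / [ ‖((wμ₁)^λ, ((1−w)μ₂)^λ)‖_m^{1/λ} · {(wμ₁)^λ + ((1−w)μ₂)^λ}² ] × f_V( (μ₁ w)^λ / ((wμ₁)^λ + ((1−w)μ₂)^λ) ). Then ∫₀¹ w·h(w; λ, f_V) dw = 1/2, even if ∫₀¹ v f_V(v) dv ≠ 1/2. -/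

import Mathlib

open MeasureTheory Set

noncomputable section

/-- `N` is a norm on `ℝ²`, viewed as a two-argument function. -/
def IsNorm2 (N : ℝ → ℝ → ℝ) : Prop :=
  (∀ x y, 0 ≤ N x y) ∧ (∀ x y, N x y = 0 ↔ x = 0 ∧ y = 0) ∧
    (∀ c x y, N (c * x) (c * y) = |c| * N x y) ∧
    (∀ x₁ y₁ x₂ y₂, N (x₁ + x₂) (y₁ + y₂) ≤ N x₁ y₁ + N x₂ y₂)

/-- Condition (C1): symmetry of the norm. -/
def CondC1 (N : ℝ → ℝ → ℝ) : Prop := ∀ x y, N x y = N y x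

/-- Condition (C2): the norm dominates the sup-norm. -/
def CondC2 (N : ℝ → ℝ → ℝ) : Prop := ∀ x y : ℝ, max |x| |y| ≤ N x y

/-- Condition (C3): equality with the sup-norm off the diagonal. -/
def CondC3 (N : ℝ → ℝ → ℝ) : Prop :=
  ∃ x₀ y₀ : ℝ, 0 ≤ x₀ ∧ 0 ≤ y₀ ∧ x₀ ≠ y₀ ∧ N x₀ y₀ = max x₀ y₀

/-- τ(v) = ‖(v, 1−v)‖_m / v. -/
def tau (N : ℝ → ℝ → ℝ) (v : ℝ) : ℝ := N v (1 - v) / v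

/-- The spectral density `h(w; λ, f_V)` of Remark 1 of the paper. -/
def specDens (N : ℝ → ℝ → ℝ) (l : ℝ) (fV : ℝ → ℝ) (μ₁ μ₂ w : ℝ) : ℝ :=
  1 / 2 * l ^ (1 - 1 / l) *
      (w ^ (l - 1) * (1 - w) ^ (l - 1) * μ₁ ^ l * μ₂ ^ l) /
      (N ((w * μ₁) ^ l) (((1 - w) * μ₂) ^ l) ^ (1 / l) *
        ((w * μ₁) ^ l + ((1 - w) * μ₂) ^ l) ^ (2 : ℕ)) *
    fV ((μ₁ * w) ^ l / ((w * μ₁) ^ l + ((1 - w) * μ₂) ^ l))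

/-! The substitution `v = φ(w)` with `φ(w) = μ₁^λ w^λ / (μ₁^λ w^λ + μ₂^λ (1 - w)^λ)` is an
increasing bijection of `(0, 1)`, and homogeneity of the norm gives
`τ(φ(w))^{-1/λ} = μ₁ w / ‖((wμ₁)^λ, ((1-w)μ₂)^λ)‖_m^{1/λ}`. Hence `w h(w) dw` is
`λ^{-1/λ} / (2 μ₁) · τ(v)^{-1/λ} f_V(v) dv`, whose integral is `1/2` by the very definition of
`μ₁`. Condition (C2) gives `τ ≥ 1`, which makes `μ₁` and `μ₂` positive. -/

theorem IsNorm2.lipschitzWith_affine {N : ℝ → ℝ → ℝ} (hN : IsNorm2 N) (a b c d : ℝ) :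
    LipschitzWith (N c d).toNNReal fun t => N (a + t * c) (b + t * d) := by
  refine LipschitzWith.of_le_add_mul' _ fun s t => ?_
  calc N (a + s * c) (b + s * d)
      = N ((a + t * c) + (s - t) * c) ((b + t * d) + (s - t) * d) := by ring_nf
    _ ≤ N (a + t * c) (b + t * d) + N ((s - t) * c) ((s - t) * d) := hN.2.2.2 _ _ _ _
    _ = N (a + t * c) (b + t * d) + N c d * dist s t := by
      rw [hN.2.2.1, Real.dist_eq, mul_comm |s - t|]

theorem IsNorm2.measurable_tau {N : ℝ → ℝ → ℝ} (hN : IsNorm2 N) : Measurable (tau N) := by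
  have h := (hN.lipschitzWith_affine 0 1 1 (-1)).continuous
  simp only [zero_add, mul_one, mul_neg, ← sub_eq_add_neg] at h
  exact h.measurable.div measurable_id

theorem one_le_tau {N : ℝ → ℝ → ℝ} (hC2 : CondC2 N) {v : ℝ} (hv : 0 < v) : 1 ≤ tau N v :=
  (one_le_div hv).mpr <| (le_abs_self v).trans <| (le_max_left _ _).trans (hC2 v (1 - v))

theorem IsNorm2.tau_div_add {N : ℝ → ℝ → ℝ} (hN : IsNorm2 N) {u v : ℝ} (hu : 0 < u)
    (hv : 0 ≤ v) : tau N (u / (u + v)) = N u v / u := by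
  have huv : 0 < u + v := by linarith
  have hsub : 1 - u / (u + v) = (u + v)⁻¹ * v := by field_simp; ring
  rw [tau, hsub, div_eq_inv_mul u, hN.2.2.1, abs_of_pos (inv_pos.mpr huv)]
  field_simp

theorem integral_mul_pos_of_le_one {α : Type*} [MeasurableSpace α] {μ : Measure α}
    {m f : α → ℝ} (hm : AEStronglyMeasurable m μ) (hm_pos : ∀ᵐ x ∂μ, 0 < m x)
    (hm_le : ∀ᵐ x ∂μ, m x ≤ 1) (hf : 0 ≤ᵐ[μ] f) (hf_int : Integrable f μ)
    (hf_pos : 0 < ∫ x, f x ∂μ) : 0 < ∫ x, m x * f x ∂μ := by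
  have hmf : 0 ≤ᵐ[μ] fun x => m x * f x := by
    filter_upwards [hm_pos, hf] with x hmx hfx using mul_nonneg hmx.le hfx
  have hmf_int : Integrable (fun x => m x * f x) μ := by
    refine hf_int.mono' (hm.mul hf_int.1) ?_
    filter_upwards [hm_pos, hm_le, hf] with x hmx hmx' hfx
    rw [Real.norm_eq_abs, abs_of_nonneg (mul_nonneg hmx.le hfx)]
    exact mul_le_of_le_one_left hfx hmx'
  rw [integral_pos_iff_support_of_nonneg_ae hf hf_int] at hf_pos
  rw [integral_pos_iff_support_of_nonneg_ae hmf hmf_int]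
  refine hf_pos.trans_le (measure_mono_ae ?_)
  filter_upwards [hm_pos] with x hmx hfx using mul_ne_zero hmx.ne' hfx

theorem IsNorm2.integral_tau_rpow_mul_pos {N : ℝ → ℝ → ℝ} (hN : IsNorm2 N) (hC2 : CondC2 N)
    {l : ℝ} (hl : 0 < l) {fV : ℝ → ℝ} (hfV_nonneg : ∀ v, 0 ≤ fV v)
    (hfV_int : IntegrableOn fV (Ioo 0 1)) (hfV_pos : 0 < ∫ v in Ioo 0 1, fV v)
    {g : ℝ → ℝ} (hg : Measurable g) (hg_pos : ∀ v ∈ Ioo (0 : ℝ) 1, 0 < g v) :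
    0 < ∫ v in Ioo 0 1, tau N (g v) ^ (-1 / l) * fV v := by
  have hexp : -1 / l ≤ 0 := div_nonpos_of_nonpos_of_nonneg (by norm_num) hl.le
  refine integral_mul_pos_of_le_one
    ((hN.measurable_tau.comp hg).pow_const _).aestronglyMeasurable ?_ ?_
    (ae_of_all _ hfV_nonneg) hfV_int hfV_pos
  · refine ae_restrict_of_forall_mem measurableSet_Ioo fun v hv => ?_
    exact Real.rpow_pos_of_pos (one_pos.trans_le (one_le_tau hC2 (hg_pos v hv))) _
  · refine ae_restrict_of_forall_mem measurableSet_Ioo fun v hv => ?_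
    exact Real.rpow_le_one_of_one_le_of_nonpos (one_le_tau hC2 (hg_pos v hv)) hexp

/-- The substitution `v = φ(w)` behind `h`: the odds of `φ(w)` are `(A / B) (w / (1 - w)) ^ l`. -/
def oddsPow (l A B w : ℝ) : ℝ := A * w ^ l / (A * w ^ l + B * (1 - w) ^ l)

def oddsPowDeriv (l A B w : ℝ) : ℝ :=
  l * (A * B) * (w ^ (l - 1) * (1 - w) ^ (l - 1)) / (A * w ^ l + B * (1 - w) ^ l) ^ 2

section oddsPow

variable {l A B : ℝ}

theorem oddsPow_denom_pos (hA : 0 < A) (hB : 0 < B) {w : ℝ} (hw : w ∈ Icc (0 : ℝ) 1) :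
    0 < A * w ^ l + B * (1 - w) ^ l := by
  rcases hw.1.eq_or_lt with rfl | hw0
  · simp only [sub_zero, Real.one_rpow, mul_one]
    positivity
  · have := mul_nonneg hB.le (Real.rpow_nonneg (sub_nonneg.mpr hw.2) l)
    have := mul_pos hA (Real.rpow_pos_of_pos hw0 l)
    linarith

theorem hasDerivAt_oddsPow (hA : 0 < A) (hB : 0 < B) {w : ℝ} (hw : w ∈ Ioo (0 : ℝ) 1) :
    HasDerivAt (oddsPow l A B) (oddsPowDeriv l A B w) w := by
  obtain ⟨hw0, hw1⟩ := hw
  have h1w : 0 < 1 - w := by linarith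
  have hu : HasDerivAt (fun w : ℝ => A * w ^ l) (A * (l * w ^ (l - 1))) w :=
    (Real.hasDerivAt_rpow_const (Or.inl hw0.ne')).const_mul A
  have hv : HasDerivAt (fun w : ℝ => B * (1 - w) ^ l) (B * (l * (1 - w) ^ (l - 1) * -1)) w :=
    (((Real.hasDerivAt_rpow_const (Or.inl h1w.ne')).comp w
      ((hasDerivAt_id w).const_sub 1))).const_mul B
  refine (hu.div (hu.add hv)
    (oddsPow_denom_pos hA hB (Ioo_subset_Icc_self ⟨hw0, hw1⟩)).ne').congr_deriv ?_
  have ew : w ^ l = w ^ (l - 1) * w := by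
    rw [← Real.rpow_add_one hw0.ne', sub_add_cancel]
  have e1w : (1 - w) ^ l = (1 - w) ^ (l - 1) * (1 - w) := by
    rw [← Real.rpow_add_one h1w.ne', sub_add_cancel]
  simp only [Pi.add_apply]
  rw [oddsPowDeriv, ew, e1w]
  ring

theorem oddsPowDeriv_pos (hl : 0 < l) (hA : 0 < A) (hB : 0 < B) {w : ℝ}
    (hw : w ∈ Ioo (0 : ℝ) 1) : 0 < oddsPowDeriv l A B w := by
  have h1w : 0 < 1 - w := by linarith [hw.2]
  have := oddsPow_denom_pos (l := l) hA hB (Ioo_subset_Icc_self hw)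
  have := Real.rpow_pos_of_pos hw.1 (l - 1)
  have := Real.rpow_pos_of_pos h1w (l - 1)
  unfold oddsPowDeriv
  positivity

theorem strictMonoOn_oddsPow (hl : 0 < l) (hA : 0 < A) (hB : 0 < B) :
    StrictMonoOn (oddsPow l A B) (Ioo 0 1) := by
  refine strictMonoOn_of_deriv_pos (convex_Ioo 0 1)
    (fun w hw => (hasDerivAt_oddsPow hA hB hw).continuousAt.continuousWithinAt) ?_
  rw [interior_Ioo]
  intro w hw
  rw [(hasDerivAt_oddsPow hA hB hw).deriv]
  exact oddsPowDeriv_pos hl hA hB hw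

theorem image_oddsPow_Ioo (hl : 0 < l) (hA : 0 < A) (hB : 0 < B) :
    oddsPow l A B '' Ioo 0 1 = Ioo 0 1 := by
  refine subset_antisymm ?_ ?_
  · rintro _ ⟨w, hw, rfl⟩
    have hS := oddsPow_denom_pos (l := l) hA hB (Ioo_subset_Icc_self hw)
    have hu := mul_pos hA (Real.rpow_pos_of_pos hw.1 l)
    have hv := mul_pos hB (Real.rpow_pos_of_pos (sub_pos.mpr hw.2) l)
    exact ⟨div_pos hu hS, (div_lt_one hS).mpr (by linarith)⟩
  · have hcont : ContinuousOn (oddsPow l A B) (Icc 0 1) := by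
      have := Real.continuous_rpow_const hl.le
      refine ContinuousOn.div (by fun_prop) (by fun_prop) fun w hw =>
        (oddsPow_denom_pos hA hB hw).ne'
    have := intermediate_value_Ioo zero_le_one hcont
    simpa [oddsPow, Real.zero_rpow hl.ne', hA.ne'] using this

theorem integral_Ioo_eq_integral_comp_oddsPow (hl : 0 < l) (hA : 0 < A) (hB : 0 < B)
    (g : ℝ → ℝ) :
    ∫ v in Ioo 0 1, g v = ∫ w in Ioo 0 1, oddsPowDeriv l A B w * g (oddsPow l A B w) := by
  have hcov := integral_image_eq_integral_abs_deriv_smul measurableSet_Ioo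
    (fun w hw => (hasDerivAt_oddsPow hA hB hw).hasDerivWithinAt)
    (strictMonoOn_oddsPow hl hA hB).injOn g
  rw [image_oddsPow_Ioo hl hA hB] at hcov
  rw [hcov]
  refine setIntegral_congr_fun measurableSet_Ioo fun w hw => ?_
  rw [smul_eq_mul, abs_of_pos (oddsPowDeriv_pos hl hA hB hw)]

end oddsPow

theorem IsNorm2.mul_specDens_eq {N : ℝ → ℝ → ℝ} (hN : IsNorm2 N) {l : ℝ} (hl : 0 < l)
    (fV : ℝ → ℝ) {μ₁ μ₂ : ℝ} (hμ₁ : 0 < μ₁) (hμ₂ : 0 < μ₂) {w : ℝ} (hw : w ∈ Ioo (0 : ℝ) 1) :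
    w * specDens N l fV μ₁ μ₂ w = l ^ (-1 / l) / (2 * μ₁) *
      (oddsPowDeriv l (μ₁ ^ l) (μ₂ ^ l) w *
        (tau N (oddsPow l (μ₁ ^ l) (μ₂ ^ l) w) ^ (-1 / l) *
          fV (oddsPow l (μ₁ ^ l) (μ₂ ^ l) w))) := by
  obtain ⟨hw0, hw1⟩ := hw
  have h1w : 0 < 1 - w := by linarith
  simp only [specDens, oddsPow, oddsPowDeriv]
  set u := μ₁ ^ l * w ^ l with hu_def
  set v := μ₂ ^ l * (1 - w) ^ l
  have hu : 0 < u := by positivity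
  have hv : 0 < v := by positivity
  have hNuv : 0 < N u v := (hN.1 u v).lt_of_ne fun h => hu.ne' ((hN.2.1 u v).mp h.symm).1
  have hwμ₁ : (w * μ₁) ^ l = u := by rw [Real.mul_rpow hw0.le hμ₁.le, mul_comm]
  have hμ₁w : (μ₁ * w) ^ l = u := Real.mul_rpow hμ₁.le hw0.le
  have hwμ₂ : ((1 - w) * μ₂) ^ l = v := by rw [Real.mul_rpow h1w.le hμ₂.le, mul_comm]
  have hu_root : u ^ (1 / l) = μ₁ * w := by
    rw [hu_def, ← Real.mul_rpow hμ₁.le hw0.le, ← Real.rpow_mul (by positivity),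
      mul_one_div_cancel hl.ne', Real.rpow_one]
  have htau : tau N (u / (u + v)) ^ (-1 / l) = μ₁ * w / N u v ^ (1 / l) := by
    rw [hN.tau_div_add hu hv.le, neg_div, Real.rpow_neg (by positivity),
      Real.div_rpow hNuv.le hu.le, hu_root, inv_div]
  have hl_pow : l ^ (1 - 1 / l) = l * l ^ (-1 / l) := by
    rw [show 1 - 1 / l = 1 + -1 / l by ring, Real.rpow_add hl, Real.rpow_one]
  have : 0 < N u v ^ (1 / l) := by positivity
  rw [hwμ₁, hμ₁w, hwμ₂, htau, hl_pow]
  field_simp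

theorem stmt17_general (N : ℝ → ℝ → ℝ) (hN : IsNorm2 N) (hC2 : CondC2 N)
    (l : ℝ) (hl : 0 < l) (fV : ℝ → ℝ)
    (hfV_nonneg : ∀ v, 0 ≤ fV v)
    (hfV_int : IntegrableOn fV (Set.Icc (0:ℝ) 1))
    (hfV_one : ∫ v in Set.Icc (0:ℝ) 1, fV v = 1)
    (μ₁ μ₂ : ℝ)
    (hμ₁ : μ₁ = l ^ (-1 / l) * ∫ v in Set.Icc (0:ℝ) 1, tau N v ^ (-1 / l) * fV v)
    (hμ₂ : μ₂ = l ^ (-1 / l) *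
      ∫ v in Set.Icc (0:ℝ) 1, tau N (1 - v) ^ (-1 / l) * fV v) :
    ∫ w in Set.Ioo (0:ℝ) 1, w * specDens N l fV μ₁ μ₂ w = 1 / 2 := by
  -- on `(0, 1)` the junk value `tau N 0 = 0` never enters
  rw [integral_Icc_eq_integral_Ioo] at hfV_one hμ₁ hμ₂
  have hfV_pos : 0 < ∫ v in Ioo 0 1, fV v := by rw [hfV_one]; exact one_pos
  have hI₁ := hN.integral_tau_rpow_mul_pos hC2 hl hfV_nonneg
    (hfV_int.mono_set Ioo_subset_Icc_self) hfV_pos (g := fun v => v) measurable_id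
    fun v hv => hv.1
  have hI₂ := hN.integral_tau_rpow_mul_pos hC2 hl hfV_nonneg
    (hfV_int.mono_set Ioo_subset_Icc_self) hfV_pos (g := fun v => 1 - v) (by fun_prop)
    fun v hv => sub_pos.mpr hv.2
  have hL : 0 < l ^ (-1 / l) := Real.rpow_pos_of_pos hl _
  have hμ₁_pos : 0 < μ₁ := hμ₁ ▸ mul_pos hL hI₁
  have hμ₂_pos : 0 < μ₂ := hμ₂ ▸ mul_pos hL hI₂
  rw [setIntegral_congr_fun measurableSet_Ioo fun w hw =>
      hN.mul_specDens_eq hl fV hμ₁_pos hμ₂_pos hw, integral_const_mul,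
    ← integral_Ioo_eq_integral_comp_oddsPow hl (by positivity) (by positivity)
      fun v => tau N v ^ (-1 / l) * fV v, hμ₁]
  generalize (∫ v in Ioo 0 1, tau N v ^ (-1 / l) * fV v) = I at hI₁ ⊢
  field_simp

/-- moment constraint of Remark 1: for `λ > 0` and a
probability density `f_V` on `[0,1]`, the spectral density `h(·; λ, f_V)`
satisfies `∫₀¹ w h(w; λ, f_V) dw = 1/2`, even if `∫₀¹ v f_V(v) dv ≠ 1/2`. -/
theorem stmt17 (N : ℝ → ℝ → ℝ) (hN : IsNorm2 N) (hC1 : CondC1 N) (hC2 : CondC2 N)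
    (hC3 : CondC3 N) (l : ℝ) (hl : 0 < l) (fV : ℝ → ℝ)
    (hfV_nonneg : ∀ v, 0 ≤ fV v)
    (hfV_int : IntegrableOn fV (Set.Icc (0:ℝ) 1))
    (hfV_one : ∫ v in Set.Icc (0:ℝ) 1, fV v = 1)
    (μ₁ μ₂ : ℝ)
    (hμ₁ : μ₁ = l ^ (-1 / l) * ∫ v in Set.Icc (0:ℝ) 1, tau N v ^ (-1 / l) * fV v)
    (hμ₂ : μ₂ = l ^ (-1 / l) *
      ∫ v in Set.Icc (0:ℝ) 1, tau N (1 - v) ^ (-1 / l) * fV v) :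
    ∫ w in Set.Ioo (0:ℝ) 1, w * specDens N l fV μ₁ μ₂ w = 1 / 2 :=
  stmt17_general N hN hC2 l hl fV hfV_nonneg hfV_int hfV_one μ₁ μ₂ hμ₁ hμ₂
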